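/- With Z and N as above, for Re(s) > 1 one has Z'(s)/Z(s) = ∑_{γ∈E} (log N(γ₀(γ)) / (1 - N(γ)^{-1})) · N(γ)^{-s}, where E = {(γ₀, n) : γ₀ ∈ P, n ∈ ℕ, n ≥ 1}, N((γ₀,n)) = N(γ₀)^n, and γ₀((γ₀,n)) = γ₀. -/

import Mathlib

/-!
The logarithmic derivative of the product is the sum of those of its factors `1 - N^{-s-k}`
(the product converges locally uniformly on `Re s > σ` for any `σ > 1`, since Bernoulli's
inequality `1 - N^{-σ} ≤ σ (1 - N^{-1})` bounds `∑_k N^{-σ-k}` by `σ ∑_n N^{-nσ}`), namely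
`log N · z / (1 - z) = ∑_{n ≥ 1} log N · z^n` with `z = N^{-s-k}`. Summing this triple series
over `k` first gives `∑_k N^{-n(s+k)} = N^{-ns} / (1 - N^{-n})`, which is the Lefschetz term of
the class `(γ₀, n)`. The rearrangement is legitimate because the triple series converges
absolutely: `log N / (1 - N^{-n}) ≤ 1/n + log N`, and the factor `log N` is absorbed by
lowering the exponent from `Re s` to some `σ > 1`, where the hypothesis applies.
-/

open Complex

theorem hasSum_tsum_fiberwise_swap {α β γ E : Type*} [AddCommMonoid E] [TopologicalSpace E]
    [ContinuousAdd E] [T3Space E] {f : (α × β) × γ → E} {g : α × β → E} {h : α × γ → E}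
    (hf : Summable fun y : (α × γ) × β ↦ f ((y.1.1, y.2), y.1.2))
    (hg : ∀ x, HasSum (fun c ↦ f (x, c)) (g x))
    (hh : ∀ y, HasSum (fun b ↦ f ((y.1, b), y.2)) (h y)) :
    HasSum g (∑' y, h y) := by
  let e : (α × β) × γ ≃ (α × γ) × β :=
    (Equiv.prodAssoc α β γ).trans <|
      (Equiv.prodCongr (Equiv.refl α) (Equiv.prodComm β γ)).trans (Equiv.prodAssoc α γ β).symm
  rw [(hf.hasSum.prod_fiberwise hh).tsum_eq]
  exact (e.hasSum_iff.mpr hf.hasSum).prod_fiberwise hg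

theorem summable_prod_mul_geometric_iff {α : Type*} {a r : α → ℝ} (ha : ∀ x, 0 ≤ a x)
    (hr₀ : ∀ x, 0 ≤ r x) (hr₁ : ∀ x, r x < 1) :
    Summable (fun y : α × ℕ ↦ a y.1 * r y.1 ^ y.2) ↔ Summable fun x ↦ a x / (1 - r x) := by
  rw [summable_prod_of_nonneg fun y ↦ mul_nonneg (ha _) (pow_nonneg (hr₀ _) _)]
  simp only [tsum_mul_left, tsum_geometric_of_lt_one (hr₀ _) (hr₁ _), ← div_eq_mul_inv]
  exact ⟨fun h ↦ h.2,
    fun h ↦ ⟨fun x ↦ (summable_geometric_of_lt_one (hr₀ x) (hr₁ x)).mul_left _, h⟩⟩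

theorem one_sub_rpow_neg_le_mul {b σ : ℝ} (hb : 0 < b) (hσ : 1 ≤ σ) :
    1 - b ^ (-σ) ≤ σ * (1 - b⁻¹) := by
  have := one_add_mul_self_le_rpow_one_add (s := b⁻¹ - 1) (by linarith [inv_pos.mpr hb]) hσ
  rw [add_sub_cancel, Real.inv_rpow hb.le, ← Real.rpow_neg hb.le] at this
  linarith

theorem log_div_one_sub_inv_pow_le {b : ℝ} (hb : 1 < b) {n : ℕ} (hn : n ≠ 0) :
    Real.log b / (1 - b⁻¹ ^ n) ≤ (n : ℝ)⁻¹ + Real.log b := by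
  have hn' : (0 : ℝ) < n := by positivity
  set t := n * Real.log b with ht
  have ht0 : 0 < t := mul_pos hn' (Real.log_pos hb)
  have hpow : b⁻¹ ^ n = Real.exp (-t) := by
    rw [ht, Real.exp_neg, ← Real.log_pow, Real.exp_log (by positivity), inv_pow]
  -- `t / (1 - e^{-t}) ≤ 1 + t` is `1 + t ≤ e^t`
  have key : t ≤ (1 + t) * (1 - Real.exp (-t)) := by
    have h1 := Real.add_one_le_exp t
    have h2 : Real.exp t * Real.exp (-t) = 1 := by rw [← Real.exp_add]; simp
    nlinarith [Real.exp_pos (-t)]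
  have hden : 0 < 1 - Real.exp (-t) := by
    have := Real.exp_lt_one_iff.mpr (neg_lt_zero.mpr ht0); linarith
  rw [hpow, div_le_iff₀ hden]
  have : Real.log b = t / n := by rw [ht]; field_simp
  rw [this]
  calc t / n ≤ (1 + t) * (1 - Real.exp (-t)) / n := by gcongr
    _ = ((n : ℝ)⁻¹ + t / n) * (1 - Real.exp (-t)) := by field_simp

theorem rpow_neg_natCast_add_one_mul {b : ℝ} (hb : 0 < b) (m : ℕ) (σ : ℝ) :
    b ^ (-((m : ℝ) + 1) * σ) = (b ^ (-σ)) ^ (m + 1) := by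
  rw [show -((m : ℝ) + 1) * σ = -σ * ((m + 1 : ℕ) : ℝ) by push_cast; ring,
    Real.rpow_mul hb.le, Real.rpow_natCast]

theorem log_mul_rpow_pow_div_le {b σ σ' : ℝ} (hb : 1 < b) (hσ' : σ' < σ) (m : ℕ) :
    Real.log b * (b ^ (-σ)) ^ (m + 1) / (1 - b⁻¹ ^ (m + 1)) ≤
      (1 + (σ - σ')⁻¹) * b ^ (-((m : ℝ) + 1) * σ') := by
  have hb0 : 0 < b := by linarith
  have hn : (1 : ℝ) ≤ (m : ℝ) + 1 := by linarith [m.cast_nonneg (α := ℝ)]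
  have hε : 0 < σ - σ' := by linarith
  have hcoef : Real.log b / (1 - b⁻¹ ^ (m + 1)) ≤ 1 + Real.log b := by
    have := log_div_one_sub_inv_pow_le hb (n := m + 1) (by omega)
    have : ((m + 1 : ℕ) : ℝ)⁻¹ ≤ 1 := inv_le_one_of_one_le₀ (by push_cast; exact hn)
    linarith
  have hlog : Real.log b ≤ b ^ (((m : ℝ) + 1) * (σ - σ')) / (σ - σ') := by
    calc Real.log b ≤ b ^ (((m : ℝ) + 1) * (σ - σ')) / (((m : ℝ) + 1) * (σ - σ')) :=
          Real.log_le_rpow_div hb0.le (by positivity)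
      _ ≤ b ^ (((m : ℝ) + 1) * (σ - σ')) / (σ - σ') := by
          gcongr
          nlinarith
  have hmono : b ^ (-((m : ℝ) + 1) * σ) ≤ b ^ (-((m : ℝ) + 1) * σ') :=
    Real.rpow_le_rpow_of_exponent_le hb.le (by nlinarith)
  have hshift : b ^ (((m : ℝ) + 1) * (σ - σ')) * b ^ (-((m : ℝ) + 1) * σ) =
      b ^ (-((m : ℝ) + 1) * σ') := by
    rw [← Real.rpow_add hb0]; ring_nf
  rw [← rpow_neg_natCast_add_one_mul hb0, mul_comm (Real.log b), mul_div_assoc]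
  calc b ^ (-((m : ℝ) + 1) * σ) * (Real.log b / (1 - b⁻¹ ^ (m + 1)))
      ≤ b ^ (-((m : ℝ) + 1) * σ) * (1 + Real.log b) := by gcongr
    _ = b ^ (-((m : ℝ) + 1) * σ) + Real.log b * b ^ (-((m : ℝ) + 1) * σ) := by ring
    _ ≤ b ^ (-((m : ℝ) + 1) * σ') + b ^ (-((m : ℝ) + 1) * σ') / (σ - σ') := by
        gcongr
        calc Real.log b * b ^ (-((m : ℝ) + 1) * σ)
            ≤ b ^ (((m : ℝ) + 1) * (σ - σ')) / (σ - σ') * b ^ (-((m : ℝ) + 1) * σ) := by gcongr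
          _ = _ := by rw [div_mul_eq_mul_div, hshift]
    _ = (1 + (σ - σ')⁻¹) * b ^ (-((m : ℝ) + 1) * σ') := by ring

section Summability

variable {P : Type*} {N : P → ℝ}

theorem summable_rpow_neg_div_one_sub (hN : ∀ p, 1 < N p) {σ : ℝ} (hσ : 0 < σ)
    (hs : Summable fun q : P × ℕ ↦ N q.1 ^ (-((q.2 : ℝ) + 1) * σ)) :
    Summable fun p ↦ N p ^ (-σ) / (1 - N p ^ (-σ)) := by
  have hpos p : 0 < N p ^ (-σ) := Real.rpow_pos_of_pos (by linarith [hN p]) _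
  refine (summable_prod_mul_geometric_iff (fun p ↦ (hpos p).le) (fun p ↦ (hpos p).le)
    fun p ↦ Real.rpow_lt_one_of_one_lt_of_neg (hN p) (by linarith)).mp (hs.congr fun q ↦ ?_)
  rw [rpow_neg_natCast_add_one_mul (by linarith [hN q.1]), pow_succ']

theorem summable_rpow_neg_mul_inv_pow (hN : ∀ p, 1 < N p) {σ : ℝ} (hσ : 1 ≤ σ)
    (hs : Summable fun q : P × ℕ ↦ N q.1 ^ (-((q.2 : ℝ) + 1) * σ)) :
    Summable fun q : P × ℕ ↦ N q.1 ^ (-σ) * (N q.1)⁻¹ ^ q.2 := by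
  have hN0 p : 0 < N p := by linarith [hN p]
  rw [summable_prod_mul_geometric_iff (fun p ↦ (Real.rpow_pos_of_pos (hN0 p) _).le)
    (fun p ↦ inv_nonneg.mpr (hN0 p).le) fun p ↦ inv_lt_one_of_one_lt₀ (hN p)]
  refine ((summable_rpow_neg_div_one_sub hN (by linarith) hs).mul_left σ).of_nonneg_of_le
    (fun p ↦ div_nonneg (Real.rpow_pos_of_pos (hN0 p) _).le
      (sub_nonneg.mpr (inv_le_one_of_one_le₀ (hN p).le))) fun p ↦ ?_
  have h1 : 0 < 1 - (N p)⁻¹ := sub_pos.mpr (inv_lt_one_of_one_lt₀ (hN p))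
  have h2 : 0 < 1 - N p ^ (-σ) :=
    sub_pos.mpr (Real.rpow_lt_one_of_one_lt_of_neg (hN p) (by linarith))
  rw [mul_div_assoc', div_le_div_iff₀ h1 h2]
  have := one_sub_rpow_neg_le_mul (hN0 p) hσ
  have := Real.rpow_pos_of_pos (hN0 p) (-σ)
  nlinarith

theorem summable_log_mul_rpow_pow_div (hN : ∀ p, 1 < N p) {σ σ' : ℝ} (hσ' : σ' < σ)
    (hs : Summable fun q : P × ℕ ↦ N q.1 ^ (-((q.2 : ℝ) + 1) * σ')) :
    Summable fun q : P × ℕ ↦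
      Real.log (N q.1) * (N q.1 ^ (-σ)) ^ (q.2 + 1) / (1 - (N q.1)⁻¹ ^ (q.2 + 1)) := by
  refine (hs.mul_left (1 + (σ - σ')⁻¹)).of_nonneg_of_le (fun q ↦ ?_)
    fun q ↦ log_mul_rpow_pow_div_le (hN q.1) hσ' q.2
  have hN0 : 0 < N q.1 := by linarith [hN q.1]
  refine div_nonneg (mul_nonneg (Real.log_nonneg (hN q.1).le) (by positivity)) ?_
  exact sub_nonneg.mpr (pow_le_one₀ (by positivity) (inv_le_one_of_one_le₀ (hN q.1).le))

end Summability

section ComplexPowers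

variable {b : ℝ}

theorem ofReal_cpow_eq_exp (hb : 0 < b) (w : ℂ) : (b : ℂ) ^ w = exp (Real.log b * w) := by
  rw [cpow_def_of_ne_zero (ofReal_ne_zero.mpr hb.ne'), ofReal_log hb.le]

theorem norm_ofReal_cpow_neg_sub_natCast (hb : 0 < b) (w : ℂ) (k : ℕ) :
    ‖(b : ℂ) ^ (-w - k)‖ = b ^ (-w.re) * b⁻¹ ^ k := by
  rw [norm_cpow_eq_rpow_re_of_pos hb]
  simp only [sub_re, neg_re, natCast_re]
  rw [Real.rpow_sub hb, Real.rpow_natCast, div_eq_mul_inv, inv_pow]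

theorem norm_ofReal_cpow_neg_sub_natCast_le (hb : 1 ≤ b) {σ : ℝ} {w : ℂ} (hw : σ ≤ w.re)
    (k : ℕ) : ‖(b : ℂ) ^ (-w - k)‖ ≤ b ^ (-σ) * b⁻¹ ^ k := by
  rw [norm_ofReal_cpow_neg_sub_natCast (by linarith)]
  exact mul_le_mul_of_nonneg_right (Real.rpow_le_rpow_of_exponent_le hb (by linarith))
    (pow_nonneg (inv_nonneg.mpr (by linarith)) _)

theorem norm_ofReal_cpow_neg_sub_natCast_lt_one (hb : 1 < b) {w : ℂ} (hw : 0 < w.re) (k : ℕ) :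
    ‖(b : ℂ) ^ (-w - k)‖ < 1 := by
  rw [norm_cpow_eq_rpow_re_of_pos (by linarith)]
  refine Real.rpow_lt_one_of_one_lt_of_neg hb ?_
  simp only [sub_re, neg_re, natCast_re]
  linarith [k.cast_nonneg (α := ℝ)]

theorem one_sub_ofReal_cpow_neg_sub_natCast_ne_zero (hb : 1 < b) {w : ℂ} (hw : 0 < w.re)
    (k : ℕ) : 1 - (b : ℂ) ^ (-w - k) ≠ 0 := by
  intro h
  simpa [← sub_eq_zero.mp h] using norm_ofReal_cpow_neg_sub_natCast_lt_one hb hw k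

theorem ofReal_cpow_neg_sub_natCast_pow (hb : 0 < b) (s : ℂ) (k n : ℕ) :
    ((b : ℂ) ^ (-s - k)) ^ n = ((b ^ n : ℝ) : ℂ) ^ (-s) * (((b ^ n)⁻¹ : ℝ) : ℂ) ^ k := by
  have hinv : (((b ^ n)⁻¹ : ℝ) : ℂ) = exp (-(n * Real.log b)) := by
    rw [← ofReal_natCast, ← ofReal_mul, ← ofReal_neg, ← ofReal_exp, Real.exp_neg,
      ← Real.log_pow, Real.exp_log (by positivity)]
  rw [ofReal_cpow_eq_exp hb, ofReal_cpow_eq_exp (by positivity), hinv, ← exp_nat_mul,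
    ← exp_nat_mul, ← exp_add, Real.log_pow]
  congr 1
  push_cast
  ring

theorem hasDerivAt_one_sub_cpow (hb : 0 < b) (c w : ℂ) :
    HasDerivAt (fun w ↦ 1 - (b : ℂ) ^ (-w - c)) (Real.log b * (b : ℂ) ^ (-w - c)) w := by
  have h : HasDerivAt (fun w : ℂ ↦ (b : ℂ) ^ (-w - c)) ((b : ℂ) ^ (-w - c) * log b * -1) w :=
    ((hasDerivAt_neg w).sub_const c).const_cpow (Or.inl (ofReal_ne_zero.mpr hb.ne'))
  refine (h.const_sub 1).congr_deriv ?_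
  rw [ofReal_log hb.le]
  ring

theorem logDeriv_one_sub_cpow (hb : 0 < b) (c w : ℂ) :
    logDeriv (fun w ↦ 1 - (b : ℂ) ^ (-w - c)) w =
      Real.log b * (b : ℂ) ^ (-w - c) / (1 - (b : ℂ) ^ (-w - c)) := by
  rw [logDeriv_apply, (hasDerivAt_one_sub_cpow hb c w).deriv]

theorem hasSum_mul_pow_succ {z : ℂ} (hz : ‖z‖ < 1) (l : ℂ) :
    HasSum (fun m : ℕ ↦ l * z ^ (m + 1)) (l * z / (1 - z)) := by
  rw [div_eq_mul_inv]
  exact ((hasSum_geometric_of_norm_lt_one hz).mul_left (l * z)).congr_fun fun m ↦ by ring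

theorem hasSum_log_mul_cpow_pow (hb : 1 < b) (s : ℂ) (n : ℕ) (hn : n ≠ 0) :
    HasSum (fun k : ℕ ↦ (Real.log b : ℂ) * ((b : ℂ) ^ (-s - k)) ^ n)
      (((Real.log b / (1 - (b ^ n)⁻¹) : ℝ) : ℂ) * ((b ^ n : ℝ) : ℂ) ^ (-s)) := by
  have hb0 : 0 < b := by linarith
  have hr : ‖(((b ^ n)⁻¹ : ℝ) : ℂ)‖ < 1 := by
    rw [norm_real, Real.norm_of_nonneg (by positivity)]
    exact inv_lt_one_of_one_lt₀ (one_lt_pow₀ hb hn)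
  have hsum : ((Real.log b / (1 - (b ^ n)⁻¹) : ℝ) : ℂ) * ((b ^ n : ℝ) : ℂ) ^ (-s) =
      Real.log b * ((b ^ n : ℝ) : ℂ) ^ (-s) * (1 - (((b ^ n)⁻¹ : ℝ) : ℂ))⁻¹ := by
    push_cast
    ring
  simp_rw [hsum, ofReal_cpow_neg_sub_natCast_pow hb0, ← mul_assoc]
  exact (hasSum_geometric_of_norm_lt_one hr).mul_left _

end ComplexPowers


section SelbergProduct

variable {P : Type*} {N : P → ℝ}

theorem multipliableLocallyUniformlyOn_one_sub_cpow (hN : ∀ p, 1 < N p) {σ : ℝ} (hσ : 1 < σ)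
    (hs : Summable fun q : P × ℕ ↦ N q.1 ^ (-((q.2 : ℝ) + 1) * σ)) :
    MultipliableLocallyUniformlyOn
      (fun (q : P × ℕ) (w : ℂ) ↦ 1 - (N q.1 : ℂ) ^ (-w - q.2)) {w : ℂ | σ < w.re} := by
  simp_rw [sub_eq_add_neg (1 : ℂ)]
  refine (summable_rpow_neg_mul_inv_pow hN hσ.le hs).multipliableLocallyUniformlyOn_one_add
    (isOpen_lt continuous_const continuous_re) (.of_forall fun q w hw ↦ ?_) fun q ↦ ?_
  · rw [norm_neg]
    exact norm_ofReal_cpow_neg_sub_natCast_le (hN q.1).le (le_of_lt hw) q.2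
  · exact ((continuous_neg.sub continuous_const).const_cpow
      (Or.inl (ofReal_ne_zero.mpr (by linarith [hN q.1])))).neg.continuousOn

theorem tprod_one_sub_cpow_ne_zero (hN : ∀ p, 1 < N p) {σ : ℝ} (hσ : 1 ≤ σ)
    (hs : Summable fun q : P × ℕ ↦ N q.1 ^ (-((q.2 : ℝ) + 1) * σ)) {w : ℂ} (hw : σ ≤ w.re) :
    ∏' q : P × ℕ, (1 - (N q.1 : ℂ) ^ (-w - q.2)) ≠ 0 := by
  simp_rw [sub_eq_add_neg (1 : ℂ)]
  refine tprod_one_add_ne_zero_of_summable (fun q ↦ ?_) ?_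
  · simpa [sub_eq_add_neg] using
      one_sub_ofReal_cpow_neg_sub_natCast_ne_zero (hN q.1) (by linarith) q.2
  · refine (summable_rpow_neg_mul_inv_pow hN hσ hs).of_nonneg_of_le (fun _ ↦ norm_nonneg _)
      fun q ↦ ?_
    rw [norm_neg]
    exact norm_ofReal_cpow_neg_sub_natCast_le (hN q.1).le hw q.2

-- The index `((p, n), k)` stands for the `(n + 1)`-st term of the expansion of the logarithmic
-- derivative of the factor `1 - N p ^ (-s - k)`.
theorem summable_log_mul_cpow_pow (hN : ∀ p, 1 < N p) {σ : ℝ} {s : ℂ} (hσ : σ < s.re)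
    (hs : Summable fun q : P × ℕ ↦ N q.1 ^ (-((q.2 : ℝ) + 1) * σ)) :
    Summable fun y : (P × ℕ) × ℕ ↦
      (Real.log (N y.1.1) : ℂ) * ((N y.1.1 : ℂ) ^ (-s - y.2)) ^ (y.1.2 + 1) := by
  have hN0 p : 0 < N p := by linarith [hN p]
  have hlog (q : P × ℕ) : 0 ≤ Real.log (N q.1) := Real.log_nonneg (hN q.1).le
  have hinv (q : P × ℕ) : 0 ≤ (N q.1)⁻¹ := inv_nonneg.mpr (hN0 q.1).le
  have hgeom := (summable_prod_mul_geometric_iff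
    (a := fun q : P × ℕ ↦ Real.log (N q.1) * (N q.1 ^ (-s.re)) ^ (q.2 + 1))
    (r := fun q ↦ (N q.1)⁻¹ ^ (q.2 + 1))
    (fun q ↦ mul_nonneg (hlog q) (pow_nonneg (Real.rpow_nonneg (hN0 q.1).le _) _))
    (fun q ↦ pow_nonneg (hinv q) _)
    (fun q ↦ pow_lt_one₀ (hinv q) (inv_lt_one_of_one_lt₀ (hN q.1)) q.2.succ_ne_zero)).mpr
    (summable_log_mul_rpow_pow_div hN hσ hs)
  refine Summable.of_norm (hgeom.congr fun y ↦ ?_)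
  simp only [norm_mul, norm_pow, norm_real, Real.norm_of_nonneg (hlog y.1),
    norm_ofReal_cpow_neg_sub_natCast (hN0 y.1.1)]
  ring

theorem hasSum_logDeriv_one_sub_cpow (hN : ∀ p, 1 < N p) {σ : ℝ} {s : ℂ} (hσ : σ < s.re)
    (hσ₀ : 0 < σ) (hs : Summable fun q : P × ℕ ↦ N q.1 ^ (-((q.2 : ℝ) + 1) * σ)) :
    HasSum (fun q : P × ℕ ↦ logDeriv (fun w : ℂ ↦ 1 - (N q.1 : ℂ) ^ (-w - q.2)) s)
      (∑' q : P × ℕ, ((Real.log (N q.1) / (1 - (N q.1 ^ (q.2 + 1))⁻¹) : ℝ) : ℂ) *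
        ((N q.1 ^ (q.2 + 1) : ℝ) : ℂ) ^ (-s)) := by
  refine hasSum_tsum_fiberwise_swap (f := fun x : (P × ℕ) × ℕ ↦
      (Real.log (N x.1.1) : ℂ) * ((N x.1.1 : ℂ) ^ (-s - x.1.2)) ^ (x.2 + 1))
    (summable_log_mul_cpow_pow hN hσ hs) (fun q ↦ ?_)
    fun q ↦ hasSum_log_mul_cpow_pow (hN q.1) s (q.2 + 1) q.2.succ_ne_zero
  rw [logDeriv_one_sub_cpow (by linarith [hN q.1])]
  exact hasSum_mul_pow_succ (norm_ofReal_cpow_neg_sub_natCast_lt_one (hN q.1) (by linarith) _) _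

end SelbergProduct

theorem selberg_log_deriv_as_lefschetz_series_general
    (P : Type*)
    (N : P → ℝ) (hN : ∀ p, 1 < N p)
    (hsum : ∀ σ : ℝ, 1 < σ →
      Summable fun q : P × ℕ => N q.1 ^ (-((q.2 : ℝ) + 1) * σ))
    (Z : ℂ → ℂ)
    (hZ : Z = fun s => ∏' q : P × ℕ, (1 - (N q.1 : ℂ) ^ (-s - (q.2 : ℂ))))
    (NE : P × ℕ → ℝ) (hNE : ∀ q : P × ℕ, NE q = N q.1 ^ (q.2 + 1)) :
    ∀ s : ℂ, 1 < s.re →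
      deriv Z s / Z s =
        ∑' q : P × ℕ,
          ((Real.log (N q.1) / (1 - (NE q)⁻¹) : ℝ) : ℂ) * (NE q : ℂ) ^ (-s) := by
  intro s hs
  subst hZ
  obtain ⟨σ, hσ, hσs⟩ := exists_between hs
  have hlefschetz := hasSum_logDeriv_one_sub_cpow hN hσs (by linarith) (hsum σ hσ)
  rw [← logDeriv_apply, logDeriv_tprod_eq_tsum (isOpen_lt continuous_const continuous_re) hσs
    (fun q ↦ one_sub_ofReal_cpow_neg_sub_natCast_ne_zero (hN q.1) (by linarith) q.2)
    (fun q w _ ↦ (hasDerivAt_one_sub_cpow (by linarith [hN q.1]) _ w).differentiableAt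
      |>.differentiableWithinAt)
    hlefschetz.summable (multipliableLocallyUniformlyOn_one_sub_cpow hN hσ (hsum σ hσ))
    (tprod_one_sub_cpow_ne_zero hN hσ.le (hsum σ hσ) hσs.le), hlefschetz.tsum_eq]
  simp only [hNE]

/-- The set of all (not necessarily primitive) classes: a primitive class together
with a positive power `n = q.2 + 1`, with norm `N(γ₀)^n`. -/
theorem selberg_log_deriv_as_lefschetz_series
    (P : Type*) [Countable P]
    (N : P → ℝ) (hN : ∀ p, 1 < N p)
    (hsum : ∀ σ : ℝ, 1 < σ →
      Summable fun q : P × ℕ => N q.1 ^ (-((q.2 : ℝ) + 1) * σ))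
    (Z : ℂ → ℂ)
    (hZ : Z = fun s => ∏' q : P × ℕ, (1 - (N q.1 : ℂ) ^ (-s - (q.2 : ℂ))))
    (NE : P × ℕ → ℝ) (hNE : ∀ q : P × ℕ, NE q = N q.1 ^ (q.2 + 1)) :
    ∀ s : ℂ, 1 < s.re →
      deriv Z s / Z s =
        ∑' q : P × ℕ,
          ((Real.log (N q.1) / (1 - (NE q)⁻¹) : ℝ) : ℂ) * (NE q : ℂ) ^ (-s) :=
  selberg_log_deriv_as_lefschetz_series_general P N hN hsum Z hZ NE hNE
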